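/- Let Γ be a connected 2-distance-transitive graph of valency p + 1, where p is a prime. If Γ has girth at least 4, then Γ is 2-arc-transitive. -/

import Mathlib

/-- `Γ` is 2-distance-transitive (with respect to its full automorphism group):
vertex-transitive, and each vertex stabilizer is transitive on the first and second
step neighborhoods. -/
def TwoDistanceTransitive {V : Type*} (Γ : SimpleGraph V) : Prop :=
  (∀ u v : V, ∃ g : Γ ≃g Γ, g u = v) ∧
  (∀ u v w : V, Γ.Adj u v → Γ.Adj u w → ∃ g : Γ ≃g Γ, g u = u ∧ g v = w) ∧
  (∀ u v w : V, Γ.dist u v = 2 → Γ.dist u w = 2 → ∃ g : Γ ≃g Γ, g u = u ∧ g v = w)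

/-- `Γ` is 2-arc-transitive: vertex-transitive and transitive on 2-arcs `(u,v,w)`
with `u ≠ w` and both `u`, `w` adjacent to `v`. -/
def TwoArcTransitive {V : Type*} (Γ : SimpleGraph V) : Prop :=
  (∀ u v : V, ∃ g : Γ ≃g Γ, g u = v) ∧
  (∀ u v w u' v' w' : V, Γ.Adj u v → Γ.Adj v w → u ≠ w →
    Γ.Adj u' v' → Γ.Adj v' w' → u' ≠ w' →
    ∃ g : Γ ≃g Γ, g u = u' ∧ g v = v' ∧ g w = w')

/-
Let `c` be the number of common neighbours of two vertices at distance `2`; it is constant by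
2-distance-transitivity, and counting edges between `Γ(u)` and `Γ₂(u)` gives
`|Γ₂(u)| * c = (p + 1) * p`.

If `p ∤ c`, count the orbit of a 2-arc `(u, v, w)` under the stabiliser `G_u`: it has `f` elements
over each vertex of `Γ(u)` and `e` over each vertex of `Γ₂(u)`, so `(p + 1) * f = |Γ₂(u)| * e` and
hence `f * c = e * p`. Then `p ∣ f`, and `0 < f ≤ |Γ(v) \ {u}| = p` forces `f = p`: the stabiliser
of `(u, v)` is transitive on `Γ(v) \ {u}`.

If `p ∣ c`, then `c = p` because `0 < c ≤ p + 1`, and the graph is `K_{p+2,p+2}` minus a perfect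
matching: `Γ₂(u)` is independent, every vertex of `Γ₂(u)` has exactly one neighbour at distance
`3`, there is exactly one vertex at distance `3` and none further. So every vertex `s` has an
antipode `s'`, the graph is bipartite, and `s ~ t` iff `s, t` lie on different sides and `t ≠ s'`.
Swapping two vertices `w, w'` of `Γ(v) \ {u}` and simultaneously their antipodes is then an
automorphism fixing `u` and `v`.
-/

lemma Equiv.apply_swap_apply_of_eq {α β : Type*} [DecidableEq α] {f : α → β} {a b : α}
    (hab : f a = f b) (x : α) : f (Equiv.swap a b x) = f x := by
  rw [Equiv.swap_apply_def]
  split_ifs <;> simp_all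

lemma Equiv.Perm.commute_swap_mul_swap {α : Type*} [DecidableEq α] {σ : Equiv.Perm α}
    (hσ : Function.Involutive σ) {a b : α} (hab : [a, b, σ a, σ b].Nodup) :
    Commute σ (Equiv.swap a b * Equiv.swap (σ a) (σ b)) := by
  have hdisj := (disjoint_swap_swap hab).commute
  calc σ * (swap a b * swap (σ a) (σ b)) = swap (σ a) (σ b) * (σ * swap (σ a) (σ b)) := by
        simp only [← mul_assoc, mul_swap_eq_swap_mul σ a b]
    _ = swap (σ a) (σ b) * swap a b * σ := by
        rw [mul_swap_eq_swap_mul σ (σ a), hσ a, hσ b, mul_assoc]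
    _ = swap a b * swap (σ a) (σ b) * σ := by rw [← hdisj.eq]

open Finset

namespace SimpleGraph

variable {V W : Type*} {G : SimpleGraph V} {G' : SimpleGraph W}

lemma Hom.edist_map_le (f : G →g G') (a b : V) : G'.edist (f a) (f b) ≤ G.edist a b :=
  le_iInf fun w => (edist_le (w.map f)).trans_eq (by simp)

lemma Iso.edist_map (f : G ≃g G') (a b : V) : G'.edist (f a) (f b) = G.edist a b :=
  (Hom.edist_map_le f.toHom a b).antisymm <| by
    simpa using Hom.edist_map_le f.symm.toHom (f a) (f b)

lemma Iso.dist_map (f : G ≃g G') (a b : V) : G'.dist (f a) (f b) = G.dist a b := by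
  simp only [dist, f.edist_map]

lemma cliqueFree_three_of_four_le_egirth (h : 4 ≤ G.egirth) : G.CliqueFree 3 := by
  by_contra hG
  have := ((not_cliqueFree_iff_top_isContained 3).mp hG).egirth_le
  rw [egirth_top (by simp)] at this
  exact absurd (h.trans this) (by decide)

lemma CliqueFree.dist_eq_two (hG : G.CliqueFree 3) {u v w : V} (huv : G.Adj u v)
    (hvw : G.Adj v w) (hwu : w ≠ u) : G.dist u w = 2 := by
  classical
  have hle : G.dist u w ≤ 2 := by simpa using dist_le (.cons huv (.cons hvw .nil))
  have hreach : G.Reachable u w := ⟨.cons huv (.cons hvw .nil)⟩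
  have h0 : G.dist u w ≠ 0 := fun h => hwu (hreach.dist_eq_zero_iff.mp h).symm
  have h1 : G.dist u w ≠ 1 := fun h =>
    hG {u, v, w} (is3Clique_triple_iff.mpr ⟨huv, dist_eq_one_iff_adj.mp h, hvw⟩)
  omega

lemma Connected.exists_adj_dist_eq (hG : G.Connected) {u y : V} {n : ℕ}
    (h : G.dist u y = n + 1) : ∃ z, G.Adj z y ∧ G.dist u z = n := by
  obtain ⟨W, hW⟩ := (hG y u).exists_walk_length_eq_dist
  have hlen : W.length = n + 1 := by rw [hW, dist_comm, h]
  have hnil : ¬ W.Nil := by rw [Walk.not_nil_iff_lt_length]; omega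
  have hadj : G.Adj W.snd y := (W.adj_snd hnil).symm
  refine ⟨W.snd, hadj, le_antisymm ?_ ?_⟩
  · have := dist_le W.tail.reverse
    have := W.length_tail_add_one hnil
    rw [Walk.length_reverse] at *
    omega
  · have := hG.dist_triangle (u := u) (v := W.snd) (w := y)
    have := dist_eq_one_iff_adj.mpr hadj
    omega

lemma Connected.exists_dist_eq_of_le (hG : G.Connected) {u y : V} {n : ℕ}
    (h : n ≤ G.dist u y) : ∃ z, G.dist u z = n := by
  obtain ⟨k, hk⟩ := Nat.exists_eq_add_of_le h
  clear h
  induction k generalizing y with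
  | zero => exact ⟨y, hk⟩
  | succ k ih =>
    obtain ⟨z, -, hz⟩ := hG.exists_adj_dist_eq hk
    exact ih hz

lemma Walk.length_mod_two_eq {f : V → ℕ} (hf : ∀ s t, G.Adj s t → f s % 2 ≠ f t % 2)
    {s t : V} (W : G.Walk s t) : (f s + W.length) % 2 = f t % 2 := by
  induction W with
  | nil => simp
  | cons h W ih =>
    have := hf _ _ h
    rw [Walk.length_cons]
    omega

def ArcStabilizerTransitive (G : SimpleGraph V) : Prop :=
  ∀ u v w w', G.Adj u v → G.Adj v w → G.Adj v w' → w ≠ u → w' ≠ u →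
    ∃ g : G ≃g G, g u = u ∧ g v = v ∧ g w = w'

lemma _root_.TwoDistanceTransitive.twoArcTransitive (h : TwoDistanceTransitive G)
    (h' : G.ArcStabilizerTransitive) : TwoArcTransitive G := by
  refine ⟨h.1, fun u v w u' v' w' huv hvw huw hu'v' hv'w' hu'w' => ?_⟩
  obtain ⟨g₁, hg₁⟩ := h.1 u u'
  obtain ⟨g₂, hg₂u, hg₂v⟩ := h.2.1 u' (g₁ v) v' (hg₁ ▸ g₁.map_adj_iff.mpr huv) hu'v'
  have hw₂ : G.Adj v' (g₂ (g₁ w)) := hg₂v ▸ g₂.map_adj_iff.mpr (g₁.map_adj_iff.mpr hvw)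
  have hw₂u : g₂ (g₁ w) ≠ u' := by
    rw [← hg₂u, ← hg₁]
    exact fun h => huw (g₁.injective (g₂.injective h)).symm
  obtain ⟨g₃, hg₃u, hg₃v, hg₃w⟩ := h' u' v' _ w' hu'v' hw₂ hv'w' hw₂u hu'w'.symm
  exact ⟨g₁.trans (g₂.trans g₃), by simp [hg₁, hg₂u, hg₃u], by simp [hg₂v, hg₃v], by simp [hg₃w]⟩

section Finite

variable [Fintype V]

noncomputable def sphere (G : SimpleGraph V) (u : V) (n : ℕ) : Finset V := {y | G.dist u y = n}

@[simp]
lemma mem_sphere {u y : V} {n : ℕ} : y ∈ G.sphere u n ↔ G.dist u y = n := by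
  simp [sphere]

lemma isRegularOfDegree_of_ncard_neighborSet [DecidableRel G.Adj] {d : ℕ}
    (h : ∀ v, (G.neighborSet v).ncard = d) : G.IsRegularOfDegree d := fun v => by
  rw [← h v, Set.ncard_eq_toFinset_card', ← card_neighborFinset_eq_degree]
  rfl

variable [DecidableEq V] [DecidableRel G.Adj]

lemma IsRegularOfDegree.card_erase_neighborFinset {d : ℕ} (hreg : G.IsRegularOfDegree (d + 1))
    {u v : V} (huv : G.Adj u v) : #((G.neighborFinset v).erase u) = d := by
  rw [card_erase_of_mem ((mem_neighborFinset _ _ _).mpr huv.symm), card_neighborFinset_eq_degree,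
    hreg.degree_eq, Nat.add_sub_cancel]

lemma Iso.card_inter_neighborFinset [Fintype W] [DecidableEq W] [DecidableRel G'.Adj]
    (f : G ≃g G') (a b : V) :
    #(G'.neighborFinset (f a) ∩ G'.neighborFinset (f b)) =
      #(G.neighborFinset a ∩ G.neighborFinset b) :=
  (card_equiv f.toEquiv fun x => by simp [f.map_adj_iff]).symm

lemma _root_.TwoDistanceTransitive.card_inter_neighborFinset_eq (h : TwoDistanceTransitive G)
    {a b a' b' : V} (hab : G.dist a b = 2) (hab' : G.dist a' b' = 2) :
    #(G.neighborFinset a ∩ G.neighborFinset b) = #(G.neighborFinset a' ∩ G.neighborFinset b') := by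
  obtain ⟨g₁, rfl⟩ := h.1 a a'
  obtain ⟨g₂, hg₂a, rfl⟩ := h.2.2 (g₁ a) (g₁ b) b' (by rwa [g₁.dist_map]) hab'
  rw [← hg₂a, g₂.card_inter_neighborFinset, g₁.card_inter_neighborFinset]

lemma CliqueFree.filter_adj_sphere_two (hG : G.CliqueFree 3) {u a : V} (hua : G.Adj u a) :
    {y ∈ G.sphere u 2 | G.Adj a y} = (G.neighborFinset a).erase u := by
  ext y
  simp only [mem_filter, mem_sphere, mem_erase, mem_neighborFinset]
  constructor
  · rintro ⟨hy, hay⟩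
    exact ⟨by rintro rfl; simp at hy, hay⟩
  · rintro ⟨hyu, hay⟩
    exact ⟨hG.dist_eq_two hua hay hyu, hay⟩

lemma CliqueFree.card_sphere_two_mul (hG : G.CliqueFree 3) {d c : ℕ}
    (hreg : G.IsRegularOfDegree (d + 1)) (u : V)
    (hc : ∀ w ∈ G.sphere u 2, #(G.neighborFinset u ∩ G.neighborFinset w) = c) :
    #(G.sphere u 2) * c = (d + 1) * d := by
  have := card_mul_eq_card_mul G.Adj (s := G.neighborFinset u) (t := G.sphere u 2) (m := d)
    (n := c) (fun a ha => ?_) (fun b hb => ?_)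
  · rw [card_neighborFinset_eq_degree, hreg.degree_eq] at this
    rw [← this, mul_comm]
  · have hua := (mem_neighborFinset _ _ _).mp ha
    rw [bipartiteAbove, hG.filter_adj_sphere_two hua, hreg.card_erase_neighborFinset hua]
  · rw [← hc b hb, bipartiteBelow]
    congr 1
    ext x
    simp [G.adj_comm x b]

lemma CliqueFree.sphere_two_nonempty (hG : G.CliqueFree 3) {d : ℕ}
    (hreg : G.IsRegularOfDegree (d + 1)) (hd : 0 < d) (u : V) : (G.sphere u 2).Nonempty := by
  obtain ⟨v, hv⟩ : (G.neighborFinset u).Nonempty := by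
    rw [← card_pos, card_neighborFinset_eq_degree, hreg.degree_eq]; omega
  have huv := (mem_neighborFinset _ _ _).mp hv
  obtain ⟨w, hw⟩ : ((G.neighborFinset v).erase u).Nonempty := by
    rwa [← card_pos, hreg.card_erase_neighborFinset huv]
  rw [← hG.filter_adj_sphere_two huv] at hw
  exact ⟨w, (mem_filter.mp hw).1⟩

open Classical in
theorem _root_.TwoDistanceTransitive.dvd_card_filter_mul {p c : ℕ} (h : TwoDistanceTransitive G)
    (hG : G.CliqueFree 3) (hreg : G.IsRegularOfDegree (p + 1)) {u v w : V}
    (hc : ∀ b ∈ G.sphere u 2, #(G.neighborFinset u ∩ G.neighborFinset b) = c)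
    (huv : G.Adj u v) (hvw : G.Adj v w) (hwu : w ≠ u) :
    p ∣ #{b ∈ G.sphere u 2 | ∃ g : G ≃g G, g u = u ∧ g v = v ∧ g w = b} * c := by
  let r : V → V → Prop := fun a b => ∃ g : G ≃g G, g u = u ∧ g v = a ∧ g w = b
  have hr : ∀ g : G ≃g G, g u = u → ∀ a b, r a b ↔ r (g a) (g b) := by
    refine fun g hgu a b => ⟨fun ⟨k, hku, hka, hkb⟩ => ⟨k.trans g, ?_⟩,
      fun ⟨k, hku, hka, hkb⟩ => ⟨k.trans g.symm, ?_⟩⟩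
    · simp [hku, hgu, hka, hkb]
    · simp [hku, hka, hkb, g.symm_apply_eq.mpr hgu.symm]
  have hsphere : ∀ g : G ≃g G, g u = u → ∀ x, x ∈ G.sphere u 2 ↔ g x ∈ G.sphere u 2 := by
    intro g hgu x
    rw [mem_sphere, mem_sphere, ← g.dist_map u x, hgu]
  have hnbr : ∀ g : G ≃g G, g u = u →
      ∀ x, x ∈ G.neighborFinset u ↔ g x ∈ G.neighborFinset u := by
    intro g hgu x
    rw [mem_neighborFinset, mem_neighborFinset, ← g.map_adj_iff, hgu]
  set f := #((G.sphere u 2).bipartiteAbove r v)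
  set e := #((G.neighborFinset u).bipartiteBelow r w)
  have habove : ∀ a ∈ G.neighborFinset u, #((G.sphere u 2).bipartiteAbove r a) = f := by
    intro a ha
    obtain ⟨g, hgu, rfl⟩ := h.2.1 u v a huv ((mem_neighborFinset _ _ _).mp ha)
    exact (card_equiv g.toEquiv fun x => by simp [hsphere g hgu x, hr g hgu v x]).symm
  have hbelow : ∀ b ∈ G.sphere u 2, #((G.neighborFinset u).bipartiteBelow r b) = e := by
    intro b hb
    obtain ⟨g, hgu, rfl⟩ := h.2.2 u w b (hG.dist_eq_two huv hvw hwu) (mem_sphere.mp hb)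
    exact (card_equiv g.toEquiv fun x => by simp [hnbr g hgu x, hr g hgu x w]).symm
  have horbit : (p + 1) * f = #(G.sphere u 2) * e := by
    rw [← hreg.degree_eq u, ← card_neighborFinset_eq_degree]
    exact card_mul_eq_card_mul r habove hbelow
  have hedges : #(G.sphere u 2) * c = (p + 1) * p := hG.card_sphere_two_mul hreg u hc
  refine Dvd.intro_left e (Nat.eq_of_mul_eq_mul_left (Nat.succ_pos p) ?_)
  calc (p + 1) * (e * p) = #(G.sphere u 2) * c * e := by rw [hedges]; ring
    _ = (p + 1) * (f * c) := by rw [mul_right_comm, ← horbit]; ring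

theorem _root_.TwoDistanceTransitive.arcStabilizerTransitive_of_not_dvd {p c : ℕ}
    (h : TwoDistanceTransitive G) (hp : p.Prime) (hG : G.CliqueFree 3)
    (hreg : G.IsRegularOfDegree (p + 1))
    (hc : ∀ a b, G.dist a b = 2 → #(G.neighborFinset a ∩ G.neighborFinset b) = c)
    (hpc : ¬ p ∣ c) : G.ArcStabilizerTransitive := by
  classical
  intro u v w w' huv hvw hvw' hwu hw'u
  set O := {b ∈ G.sphere u 2 | ∃ g : G ≃g G, g u = u ∧ g v = v ∧ g w = b}
  have hsub : O ⊆ (G.neighborFinset v).erase u := by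
    rw [← hG.filter_adj_sphere_two huv]
    refine monotone_filter_right _ fun b _ ⟨g, _, hgv, hgb⟩ => ?_
    rw [← hgv, ← hgb]
    exact g.map_adj_iff.mpr hvw
  have hcard : #((G.neighborFinset v).erase u) = p := hreg.card_erase_neighborFinset huv
  have hO : #O = p := by
    have hpos : 0 < #O := card_pos.mpr ⟨w, mem_filter.mpr
      ⟨mem_sphere.mpr (hG.dist_eq_two huv hvw hwu), RelIso.refl _, rfl, rfl, rfl⟩⟩
    have hdvd : p ∣ #O := (hp.dvd_mul.mp <| h.dvd_card_filter_mul hG hreg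
      (fun b hb => hc u b (mem_sphere.mp hb)) huv hvw hwu).resolve_right hpc
    exact (hcard ▸ card_le_card hsub).antisymm (Nat.le_of_dvd hpos hdvd)
  have hw' : w' ∈ O := by
    rw [eq_of_subset_of_card_le hsub (hcard.trans hO.symm).le]
    exact mem_erase.mpr ⟨hw'u, (mem_neighborFinset _ _ _).mpr hvw'⟩
  exact (mem_filter.mp hw').2

variable {p : ℕ}

/-- These conditions force `G` to be the crown graph `K_{p+2,p+2}` minus a perfect matching. -/
structure CrownConditions (G : SimpleGraph V) [DecidableRel G.Adj] (p : ℕ) : Prop where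
  two_le : 2 ≤ p
  connected : G.Connected
  cliqueFree : G.CliqueFree 3
  regular : G.IsRegularOfDegree (p + 1)
  card_inter : ∀ a b, G.dist a b = 2 → #(G.neighborFinset a ∩ G.neighborFinset b) = p

namespace CrownConditions

lemma not_adj_of_dist_eq_two (h : CrownConditions G p) {u a b : V} (ha : G.dist u a = 2)
    (hb : G.dist u b = 2) : ¬ G.Adj a b := by
  intro hab
  set X := G.neighborFinset u ∩ G.neighborFinset a
  set Y := G.neighborFinset u ∩ G.neighborFinset b
  have hXY : #(X ∪ Y) ≤ p + 1 := by
    rw [← h.regular.degree_eq u, ← card_neighborFinset_eq_degree]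
    exact card_le_card (union_subset inter_subset_left inter_subset_left)
  have := card_union_add_card_inter X Y
  have := h.two_le
  obtain ⟨t, ht⟩ : (X ∩ Y).Nonempty := by
    rw [← card_pos]; rw [h.card_inter u a ha, h.card_inter u b hb] at *; omega
  simp only [X, Y, mem_inter, mem_neighborFinset] at ht
  exact h.cliqueFree {t, a, b} (is3Clique_triple_iff.mpr ⟨ht.1.2.symm, ht.2.2.symm, hab⟩)

lemma dist_eq_three_iff_not_adj (h : CrownConditions G p) {u w y : V} (hw : G.dist u w = 2)
    (hwy : G.Adj w y) : G.dist u y = 3 ↔ ¬ G.Adj u y := by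
  have hle := h.connected.dist_triangle (u := u) (v := w) (w := y)
  have hy0 : G.dist u y ≠ 0 := fun h0 => by
    rw [h.connected.dist_eq_zero_iff.mp h0, dist_eq_one_iff_adj.mpr hwy.symm] at hw
    omega
  have hy2 : G.dist u y ≠ 2 := fun hy => h.not_adj_of_dist_eq_two hw hy hwy
  rw [dist_eq_one_iff_adj.mpr hwy] at hle
  rw [← dist_eq_one_iff_adj]
  omega

lemma card_filter_dist_eq_three (h : CrownConditions G p) {u w : V} (hw : G.dist u w = 2) :
    #{y ∈ G.neighborFinset w | G.dist u y = 3} = 1 := by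
  have : {y ∈ G.neighborFinset w | G.dist u y = 3} = G.neighborFinset w \ G.neighborFinset u := by
    ext y
    simp only [mem_filter, mem_sdiff, mem_neighborFinset]
    exact and_congr_right (h.dist_eq_three_iff_not_adj hw)
  rw [this, card_sdiff, card_neighborFinset_eq_degree, h.regular.degree_eq, h.card_inter u w hw]
  omega

lemma card_sphere_two (h : CrownConditions G p) (u : V) : #(G.sphere u 2) = p + 1 :=
  Nat.eq_of_mul_eq_mul_right (by have := h.two_le; omega) <|
    h.cliqueFree.card_sphere_two_mul h.regular u fun w hw => h.card_inter u w (mem_sphere.mp hw)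

lemma le_card_filter_adj_sphere_two (h : CrownConditions G p) {u y : V}
    (hy : G.dist u y = 3) : p ≤ #{w ∈ G.sphere u 2 | G.Adj y w} := by
  obtain ⟨z, hzy, hz⟩ := h.connected.exists_adj_dist_eq (n := 2) hy
  obtain ⟨v, hv⟩ : (G.neighborFinset u ∩ G.neighborFinset z).Nonempty := by
    rw [← card_pos, h.card_inter u z hz]; have := h.two_le; omega
  simp only [mem_inter, mem_neighborFinset] at hv
  have hvy : G.dist v y = 2 :=
    h.cliqueFree.dist_eq_two hv.2.symm hzy fun hyv => by
      rw [hyv, dist_eq_one_iff_adj.mpr hv.1] at hy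
      omega
  rw [← h.card_inter v y hvy]
  refine card_le_card fun t ht => ?_
  simp only [mem_inter, mem_neighborFinset, mem_filter, mem_sphere] at ht ⊢
  refine ⟨h.cliqueFree.dist_eq_two hv.1 ht.1 fun htu => ?_, ht.2⟩
  rw [htu] at ht
  rw [dist_eq_one_iff_adj.mpr ht.2.symm] at hy
  omega

lemma card_sphere_three_le_one (h : CrownConditions G p) (u : V) : #(G.sphere u 3) ≤ 1 := by
  have hcount := card_mul_le_card_mul' G.Adj (s := G.sphere u 2) (t := G.sphere u 3) (n := p)
    (m := 1) (fun y hy => h.le_card_filter_adj_sphere_two (mem_sphere.mp hy) |>.trans_eq ?_)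
    (fun w hw => ?_)
  · rw [h.card_sphere_two] at hcount
    have := h.two_le
    by_contra! h2
    nlinarith
  · simp [bipartiteBelow, G.adj_comm]
  · rw [← h.card_filter_dist_eq_three (mem_sphere.mp hw)]
    exact card_le_card fun y => by simp +contextual [bipartiteAbove]

lemma dist_le_three (h : CrownConditions G p) (u y : V) : G.dist u y ≤ 3 := by
  by_contra! hy
  obtain ⟨z, hz⟩ := h.connected.exists_dist_eq_of_le (n := 4) hy
  obtain ⟨x, hxz, hx⟩ := h.connected.exists_adj_dist_eq (n := 3) hz
  obtain ⟨w, hw⟩ : {w ∈ G.sphere u 2 | G.Adj x w}.Nonempty := by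
    rw [← card_pos]; have := h.le_card_filter_adj_sphere_two hx; have := h.two_le; omega
  simp only [mem_filter, mem_sphere] at hw
  have hwz : G.dist w z = 2 :=
    h.cliqueFree.dist_eq_two hw.2.symm hxz fun hzw => by rw [hzw] at hz; omega
  have hsub : G.neighborFinset w ∩ G.neighborFinset z ⊆ G.sphere u 3 := fun t ht => by
    simp only [mem_inter, mem_neighborFinset] at ht
    have := h.connected.dist_triangle (u := u) (v := w) (w := t)
    have := h.connected.dist_triangle (u := u) (v := t) (w := z)
    rw [dist_eq_one_iff_adj.mpr ht.1] at *
    rw [dist_eq_one_iff_adj.mpr ht.2.symm] at *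
    rw [mem_sphere]
    omega
  have := (card_le_card hsub).trans (h.card_sphere_three_le_one u)
  rw [h.card_inter w z hwz] at this
  have := h.two_le
  omega

lemma existsUnique_dist_eq_three (h : CrownConditions G p) (u : V) : ∃! x, G.dist u x = 3 := by
  obtain ⟨w, hw⟩ : (G.sphere u 2).Nonempty := by rw [← card_pos, h.card_sphere_two]; omega
  obtain ⟨x, hx⟩ := card_eq_one.mp (h.card_filter_dist_eq_three (mem_sphere.mp hw))
  have hx3 : x ∈ {y ∈ G.neighborFinset w | G.dist u y = 3} := hx ▸ mem_singleton_self x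
  have hx3' := (mem_filter.mp hx3).2
  exact ⟨x, hx3', fun y hy =>
    card_le_one.mp (h.card_sphere_three_le_one u) _ (mem_sphere.mpr hy) _ (mem_sphere.mpr hx3')⟩

noncomputable def antipode (h : CrownConditions G p) (u : V) : V :=
  (h.existsUnique_dist_eq_three u).exists.choose

lemma dist_eq_three_iff (h : CrownConditions G p) {u x : V} :
    G.dist u x = 3 ↔ x = h.antipode u :=
  have hspec := (h.existsUnique_dist_eq_three u).exists.choose_spec
  ⟨fun hx => (h.existsUnique_dist_eq_three u).unique hx hspec, fun hx => hx ▸ hspec⟩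

lemma dist_antipode (h : CrownConditions G p) (u : V) : G.dist u (h.antipode u) = 3 :=
  h.dist_eq_three_iff.mpr rfl

lemma antipode_involutive (h : CrownConditions G p) : Function.Involutive h.antipode :=
  fun u => (h.dist_eq_three_iff.mp (by rw [dist_comm, h.dist_antipode])).symm

lemma dist_mod_two_ne_of_adj (h : CrownConditions G p) (o : V) {s t : V} (hst : G.Adj s t) :
    G.dist o s % 2 ≠ G.dist o t % 2 := by
  suffices G.dist o s ≠ G.dist o t by
    have := hst.diff_dist_adj (u := o)
    omega
  intro heq
  have := h.dist_le_three o s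
  interval_cases hs : G.dist o s <;> replace ht := heq.symm
  · rw [h.connected.dist_eq_zero_iff] at hs ht
    exact hst.ne (hs.symm.trans ht)
  · rw [dist_eq_one_iff_adj] at hs ht
    exact h.cliqueFree {o, s, t} (is3Clique_triple_iff.mpr ⟨hs, ht, hst⟩)
  · exact h.not_adj_of_dist_eq_two hs ht hst
  · rw [h.dist_eq_three_iff] at hs ht
    exact hst.ne (hs.trans ht.symm)

lemma dist_mod_two (h : CrownConditions G p) (o s t : V) :
    G.dist s t % 2 = (G.dist o s + G.dist o t) % 2 := by
  obtain ⟨W, hW⟩ := h.connected.exists_walk_length_eq_dist s t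
  have := W.length_mod_two_eq fun _ _ => h.dist_mod_two_ne_of_adj o
  omega

lemma adj_iff (h : CrownConditions G p) (o s t : V) :
    G.Adj s t ↔ G.dist o s % 2 ≠ G.dist o t % 2 ∧ t ≠ h.antipode s := by
  rw [show t ≠ h.antipode s ↔ G.dist s t ≠ 3 from h.dist_eq_three_iff.not.symm,
    ← dist_eq_one_iff_adj]
  have := h.dist_mod_two o s t
  have := h.dist_le_three s t
  omega

open Equiv

lemma map_adj_iff_of_commute (h : CrownConditions G p) (o : V) (τ : Perm V)
    (hside : ∀ x, G.dist o (τ x) % 2 = G.dist o x % 2)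
    (hcomm : ∀ x, τ (h.antipode x) = h.antipode (τ x)) (s t : V) :
    G.Adj (τ s) (τ t) ↔ G.Adj s t := by
  rw [h.adj_iff o, h.adj_iff o, hside, hside, ← hcomm, τ.injective.ne_iff]

lemma dist_antipode_mod_two (h : CrownConditions G p) (o s : V) :
    G.dist o (h.antipode s) % 2 ≠ G.dist o s % 2 := by
  have := h.dist_mod_two o s (h.antipode s)
  rw [h.dist_antipode] at this
  omega

theorem arcStabilizerTransitive (h : CrownConditions G p) : G.ArcStabilizerTransitive := by
  intro u v w w' huv hvw hvw' hwu hw'u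
  obtain rfl | hww' := eq_or_ne w w'
  · exact ⟨RelIso.refl _, rfl, rfl, rfl⟩
  let σ : Perm V := h.antipode_involutive.toPerm
  have hσ : ∀ {s t}, G.dist s t ≠ 3 → t ≠ σ s := fun hst => h.dist_eq_three_iff.not.mp hst
  have hw : G.dist u w = 2 := h.cliqueFree.dist_eq_two huv hvw hwu
  have hw' : G.dist u w' = 2 := h.cliqueFree.dist_eq_two huv hvw' hw'u
  have hww'2 : G.dist w w' = 2 := h.cliqueFree.dist_eq_two hvw.symm hvw' hww'.symm
  have hu : u ≠ σ w ∧ u ≠ σ w' := ⟨hσ (by rw [dist_comm, hw]; decide),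
    hσ (by rw [dist_comm, hw']; decide)⟩
  have hv : v ≠ σ w ∧ v ≠ σ w' := ⟨hσ (by rw [dist_eq_one_iff_adj.mpr hvw.symm]; decide),
    hσ (by rw [dist_eq_one_iff_adj.mpr hvw'.symm]; decide)⟩
  have hw_ne : w ≠ σ w ∧ w ≠ σ w' ∧ w' ≠ σ w :=
    ⟨hσ (by simp), hσ (by rw [dist_comm, hww'2]; decide), hσ (by rw [hww'2]; decide)⟩
  let τ : Perm V := swap w w' * swap (σ w) (σ w')
  have hcomm : Commute σ τ := Perm.commute_swap_mul_swap h.antipode_involutive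
    (by simp [hww', hw_ne, hσ (by simp : G.dist w' w' ≠ 3)])
  have hside : ∀ x, G.dist u (τ x) % 2 = G.dist u x % 2 := by
    have h₁ : G.dist u w % 2 = G.dist u w' % 2 := by rw [hw, hw']
    have h₂ : G.dist u (σ w) % 2 = G.dist u (σ w') % 2 := by
      have := h.dist_antipode_mod_two u w
      have := h.dist_antipode_mod_two u w'
      simp only [σ, Function.Involutive.coe_toPerm]
      omega
    exact fun x => (apply_swap_apply_of_eq (f := fun y => G.dist u y % 2) h₁ _).trans
      (apply_swap_apply_of_eq (f := fun y => G.dist u y % 2) h₂ x)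
  have hcomm' : ∀ x, τ (h.antipode x) = h.antipode (τ x) := fun x => (congrArg (· x) hcomm.eq).symm
  refine ⟨⟨τ, fun {a b} => h.map_adj_iff_of_commute u τ hside hcomm' a b⟩, ?_, ?_, ?_⟩
  · simp [τ, swap_apply_of_ne_of_ne, hu, hwu.symm, hw'u.symm]
  · simp [τ, swap_apply_of_ne_of_ne, hv, hvw.ne, hvw'.ne]
  · simp [τ, swap_apply_of_ne_of_ne, hw_ne]

end CrownConditions

end Finite

end SimpleGraph

open SimpleGraph Finset in
/-- A connected 2-distance-transitive graph of valency `p + 1`, `p` prime,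
with girth at least `4` is 2-arc-transitive. -/
theorem stmt10 {V : Type*} [Fintype V] (Γ : SimpleGraph V) (p : ℕ) (hp : p.Prime)
    (hconn : Γ.Connected)
    (hreg : ∀ v, (Γ.neighborSet v).ncard = p + 1)
    (h2dt : TwoDistanceTransitive Γ)
    (hgirth : 4 ≤ Γ.egirth) :
    TwoArcTransitive Γ := by
  classical
  have hG := cliqueFree_three_of_four_le_egirth hgirth
  have hreg' := isRegularOfDegree_of_ncard_neighborSet hreg
  have hp2 := hp.two_le
  obtain ⟨u⟩ := hconn.nonempty
  obtain ⟨w, hw⟩ := hG.sphere_two_nonempty hreg' hp.pos u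
  set c := #(Γ.neighborFinset u ∩ Γ.neighborFinset w)
  have hc : ∀ a b, Γ.dist a b = 2 → #(Γ.neighborFinset a ∩ Γ.neighborFinset b) = c :=
    fun a b hab => h2dt.card_inter_neighborFinset_eq hab (mem_sphere.mp hw)
  refine h2dt.twoArcTransitive ?_
  by_cases hpc : p ∣ c
  · have hc_le : c ≤ p + 1 := by
      rw [← hreg'.degree_eq u, ← card_neighborFinset_eq_degree]
      exact card_le_card inter_subset_left
    have hc_ne : c ≠ 0 := fun hc0 => by
      have := hG.card_sphere_two_mul hreg' u fun b hb => hc u b (mem_sphere.mp hb)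
      rw [hc0, mul_zero] at this
      exact absurd this.symm (by positivity)
    have hcp : c = p := Nat.eq_of_dvd_of_lt_two_mul hc_ne hpc (by omega)
    exact CrownConditions.arcStabilizerTransitive ⟨hp2, hconn, hG, hreg', hcp ▸ hc⟩
  · exact h2dt.arcStabilizerTransitive_of_not_dvd hp hG hreg' hc hpc
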